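/- arXiv:2106.09829 — 3 statements merged into one kernel-verified Lean document; each statement's English description precedes it below -/
import Mathlib

section
/- Let G be a finite connected simple graph of order n ≥ 2 and size m, with subdivision graph S(G), and let V denote the set of vertices of S(G) coming from V(G) and S the set of vertices of S(G) coming from E(G). The following statements are equivalent: (i) G contains at most one cycle; (ii) α(S(G)) = |V| = n; (iii) τ(S(G)) = |S| = m. -/
/-- The subdivision graph `S(G)`: vertices are `V(G) ⊕ E(G)`, with `v ∈ V(G)` adjacent to
`e ∈ E(G)` iff `v` is an endpoint of `e`. -/
def subdivision {V : Type*} (G : SimpleGraph V) : SimpleGraph (V ⊕ G.edgeSet) where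
  Adj a b :=
    match a, b with
    | Sum.inl v, Sum.inr e => v ∈ (e : Sym2 V)
    | Sum.inr e, Sum.inl v => v ∈ (e : Sym2 V)
    | _, _ => False
  symm := ⟨by rintro (v | e) (w | f) h <;> simp_all⟩
  loopless := ⟨by rintro (v | e) h <;> simp_all⟩


/-- A subgraph `H` of `G` is a cycle if it is connected (in particular nonempty) and every
vertex of `H` has exactly two neighbours in `H`; for finite graphs this characterizes the
cycle graphs. -/
def SimpleGraph.Subgraph.IsCycleSubgraph {V : Type*} {G : SimpleGraph V}
    (H : G.Subgraph) : Prop :=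
  H.coe.Connected ∧ ∀ v ∈ H.verts, (H.neighborSet v).ncard = 2

/-!
Everything reduces to comparing `m = |E(G)|` with `n = |V(G)|`. Fix a root `t`; sending each
vertex `s ≠ t` to the first edge of a shortest path from `s` to `t` is injective, and this edge
leaves every vertex set containing `t` but not `s`. An independent set of `S(G)` consists of a set
`A` of vertices and a set `B` of edges of `G` avoiding `A`, so (rooting outside `A`)
`|A| + |B| ≤ m` unless `A = V(G)`: thus `α(S(G)) ≤ max(n, m)`, and since covers are complements
of independent sets, both (ii) and (iii) say `m ≤ n`.

If `m > n`, then `G` is not a tree; an edge on a cycle can be deleted keeping `G` connected with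
`m - 1 ≥ n` edges, which yields a second cycle. Conversely, for two distinct cycles, the same
injection applied to their union gives `m > n`: a union of intersecting distinct cycles has a
vertex of degree at least three, and two disjoint cycles miss the first edge of a shortest path
from one to the other.
-/

lemma Set.ncard_preimage_inl_add_ncard_preimage_inr {α β : Type*} [Finite α] [Finite β]
    (s : Set (α ⊕ β)) : (Sum.inl ⁻¹' s).ncard + (Sum.inr ⁻¹' s).ncard = s.ncard := by
  conv_rhs => rw [← Set.image_preimage_inl_union_image_preimage_inr s]
  rw [Set.ncard_union_eq Set.disjoint_image_inl_image_inr,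
    Set.ncard_image_of_injective _ Sum.inl_injective,
    Set.ncard_image_of_injective _ Sum.inr_injective]

namespace SimpleGraph

open Set

variable {V : Type*} {G : SimpleGraph V}

lemma Connected.exists_adj_dist_lt (hconn : G.Connected) {s t : V} (hst : s ≠ t) :
    ∃ x, G.Adj s x ∧ G.dist x t < G.dist s t := by
  obtain ⟨p, hp⟩ := hconn.exists_walk_length_eq_dist s t
  cases p with
  | nil => exact absurd rfl hst
  | cons hadj q =>
    refine ⟨_, hadj, ?_⟩
    have := dist_le q
    rw [Walk.length_cons] at hp
    omega

lemma Subgraph.verts_subset_of_forall_adj_mem {H : G.Subgraph} (hH : H.coe.Preconnected)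
    {s : Set V} {t : V} (ht : t ∈ H.verts) (hts : t ∈ s) (hs : ∀ v ∈ s, ∀ w, H.Adj v w → w ∈ s) :
    H.verts ⊆ s := by
  suffices ∀ {a b : H.verts} (p : H.coe.Walk a b), (a : V) ∈ s → (b : V) ∈ s from
    fun u hu => this (hH ⟨t, ht⟩ ⟨u, hu⟩).some hts
  intro a b p
  induction p with
  | nil => exact id
  | cons hadj _ ih => exact fun ha => ih (hs _ ha _ hadj)

lemma Walk.IsCycle.isCycleSubgraph_toSubgraph {u : V} {c : G.Walk u u} (hc : c.IsCycle) :
    c.toSubgraph.IsCycleSubgraph :=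
  ⟨c.toSubgraph_connected.coe,
    fun _ hv => hc.ncard_neighborSet_toSubgraph_eq_two (c.mem_verts_toSubgraph.mp hv)⟩

variable [Finite V]

/-- Each `s ∈ S` picks an edge outside `F` descending along `φ`; two vertices cannot pick the
same edge, as it would have to descend in both directions. -/
lemma ncard_add_ncard_le_ncard_edgeSet {α : Type*} [Preorder α] (φ : V → α)
    {F : Set (Sym2 V)} (hF : F ⊆ G.edgeSet) {S : Set V}
    (hS : ∀ s ∈ S, ∃ x, G.Adj s x ∧ φ x < φ s ∧ s(s, x) ∉ F) :
    F.ncard + S.ncard ≤ G.edgeSet.ncard := by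
  choose! x hadj hlt hnotMem using hS
  have hinj : InjOn (fun s => s(s, x s)) S := by
    intro s₁ hs₁ s₂ hs₂ heq
    rcases Sym2.eq_iff.mp heq with ⟨h, -⟩ | ⟨h₁, h₂⟩
    · exact h
    · have h₁₂ := hlt s₁ hs₁
      have h₂₁ := hlt s₂ hs₂
      rw [h₂] at h₁₂
      rw [← h₁] at h₂₁
      exact (lt_asymm h₁₂ h₂₁).elim
  have hdisj : Disjoint F ((fun s => s(s, x s)) '' S) := by
    rw [disjoint_right]
    rintro _ ⟨s, hs, rfl⟩
    exact hnotMem s hs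
  calc F.ncard + S.ncard = (F ∪ (fun s => s(s, x s)) '' S).ncard := by
        rw [ncard_union_eq hdisj, hinj.ncard_image]
    _ ≤ G.edgeSet.ncard := by
        refine ncard_le_ncard (union_subset hF ?_)
        rintro _ ⟨s, hs, rfl⟩
        exact hadj s hs

lemma Connected.ncard_add_ncard_compl_le (hconn : G.Connected)
    {F : Set (Sym2 V)} (hF : F ⊆ G.edgeSet) {W : Set V} (hW : W.Nonempty)
    (hFW : ∀ e ∈ F, ∀ v ∈ e, v ∈ W) :
    F.ncard + Wᶜ.ncard ≤ G.edgeSet.ncard := by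
  obtain ⟨t, ht⟩ := hW
  refine ncard_add_ncard_le_ncard_edgeSet (G.dist · t) hF fun s hs => ?_
  obtain ⟨x, hadj, hlt⟩ := hconn.exists_adj_dist_lt (ne_of_mem_of_not_mem ht hs).symm
  exact ⟨x, hadj, hlt, fun he => hs (hFW _ he s (Sym2.mem_mk_left s x))⟩

lemma Subgraph.two_mul_ncard_edgeSet (H : G.Subgraph) [Fintype H.verts] :
    2 * H.edgeSet.ncard = ∑ v ∈ H.verts.toFinset, (H.neighborSet v).ncard := by
  classical
  have := Fintype.ofFinite V
  have hdeg (v : V) : H.spanningCoe.degree v = (H.neighborSet v).ncard := by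
    rw [← card_neighborSet_eq_degree, ← Nat.card_eq_fintype_card, Nat.card_coe_set_eq]
    rfl
  have hedges : H.spanningCoe.edgeFinset.card = H.edgeSet.ncard := by
    rw [edgeFinset_card, ← Nat.card_eq_fintype_card, Nat.card_coe_set_eq, edgeSet_spanningCoe]
  rw [← hedges, ← sum_degrees_eq_twice_card_edges]
  simp only [hdeg]
  refine (Finset.sum_subset (Finset.subset_univ _) fun v _ hv => ?_).symm
  rw [ncard_eq_zero, eq_empty_iff_forall_notMem]
  exact fun w hw => hv (mem_toFinset.mpr (H.edge_vert hw))

lemma Subgraph.IsCycleSubgraph.ncard_edgeSet {H : G.Subgraph} (h : H.IsCycleSubgraph) :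
    H.edgeSet.ncard = H.verts.ncard := by
  have := Fintype.ofFinite H.verts
  have := H.two_mul_ncard_edgeSet
  rw [Finset.sum_congr rfl fun v hv => h.2 v (mem_toFinset.mp hv), Finset.sum_const,
    smul_eq_mul, ← ncard_eq_toFinset_card'] at this
  omega

lemma Subgraph.ncard_verts_lt_ncard_edgeSet {H : G.Subgraph}
    (h₂ : ∀ v ∈ H.verts, 2 ≤ (H.neighborSet v).ncard)
    (h₃ : ∃ v ∈ H.verts, 2 < (H.neighborSet v).ncard) :
    H.verts.ncard < H.edgeSet.ncard := by
  have := Fintype.ofFinite H.verts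
  have hsum : ∑ _v ∈ H.verts.toFinset, 2 < 2 * H.edgeSet.ncard := by
    rw [two_mul_ncard_edgeSet]
    obtain ⟨w, hw, hw₃⟩ := h₃
    exact Finset.sum_lt_sum (fun v hv => h₂ v (mem_toFinset.mp hv)) ⟨w, mem_toFinset.mpr hw, hw₃⟩
  rw [Finset.sum_const, smul_eq_mul, ← ncard_eq_toFinset_card'] at hsum
  omega

lemma Subgraph.IsCycleSubgraph.neighborSet_eq_of_le {H K : G.Subgraph} (h : H.IsCycleSubgraph)
    (hHK : H ≤ K) (hK : ∀ v ∈ K.verts, (K.neighborSet v).ncard ≤ 2) {v : V} (hv : v ∈ H.verts) :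
    H.neighborSet v = K.neighborSet v :=
  eq_of_subset_of_ncard_le (Subgraph.neighborSet_subset_of_subgraph hHK v)
    ((hK v (hHK.1 hv)).trans (h.2 v hv).ge)

/-- In `K` the cycle `H` already uses both neighbours of each of its vertices, so no edge of `K`
leaves `H`. -/
lemma Subgraph.IsCycleSubgraph.le_of_le {H H' K : G.Subgraph} (h : H.IsCycleSubgraph)
    (h' : H'.coe.Preconnected) (hHK : H ≤ K) (hH'K : H' ≤ K)
    (hK : ∀ v ∈ K.verts, (K.neighborSet v).ncard ≤ 2) {t : V} (ht : t ∈ H.verts)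
    (ht' : t ∈ H'.verts) : H' ≤ H := by
  have hadj : ∀ v ∈ H.verts, ∀ w, H'.Adj v w → H.Adj v w := fun v hv w hvw => by
    have hw : w ∈ K.neighborSet v := Subgraph.neighborSet_subset_of_subgraph hH'K v hvw
    rwa [← h.neighborSet_eq_of_le hHK hK hv] at hw
  have hverts : H'.verts ⊆ H.verts :=
    Subgraph.verts_subset_of_forall_adj_mem h' ht' ht fun v hv w hvw => (hadj v hv w hvw).snd_mem
  exact ⟨hverts, fun v w hvw => hadj v (hverts (H'.edge_vert hvw)) w hvw⟩

lemma Connected.card_lt_ncard_edgeSet_of_isCycleSubgraph_of_mem (hconn : G.Connected)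
    {H₁ H₂ : G.Subgraph} (h₁ : H₁.IsCycleSubgraph) (h₂ : H₂.IsCycleSubgraph) (hne : H₁ ≠ H₂)
    {t : V} (ht₁ : t ∈ H₁.verts) (ht₂ : t ∈ H₂.verts) :
    Nat.card V < G.edgeSet.ncard := by
  set K := H₁ ⊔ H₂
  have hdeg_two : ∀ v ∈ K.verts, 2 ≤ (K.neighborSet v).ncard := by
    rintro v (hv | hv)
    · exact (h₁.2 v hv).ge.trans
        (ncard_le_ncard (Subgraph.neighborSet_subset_of_subgraph le_sup_left v))
    · exact (h₂.2 v hv).ge.trans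
        (ncard_le_ncard (Subgraph.neighborSet_subset_of_subgraph le_sup_right v))
  have hdeg_three : ∃ v ∈ K.verts, 2 < (K.neighborSet v).ncard := by
    by_contra! hK
    exact hne (le_antisymm (h₂.le_of_le h₁.1.preconnected le_sup_right le_sup_left hK ht₂ ht₁)
      (h₁.le_of_le h₂.1.preconnected le_sup_left le_sup_right hK ht₁ ht₂))
  have hK := Subgraph.ncard_verts_lt_ncard_edgeSet hdeg_two hdeg_three
  have hcount := hconn.ncard_add_ncard_compl_le K.edgeSet_subset ⟨t, Or.inl ht₁⟩
    fun e he v hv => K.mem_verts_of_mem_edge he hv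
  have := ncard_add_ncard_compl K.verts
  omega

/-- With `t` on `H₁` and `a` a vertex of `H₂` closest to `t`, the first edge of a shortest path
from `a` to `t` lies on neither cycle. -/
lemma Connected.card_lt_ncard_edgeSet_of_isCycleSubgraph_of_disjoint (hconn : G.Connected)
    {H₁ H₂ : G.Subgraph} (h₁ : H₁.IsCycleSubgraph) (h₂ : H₂.IsCycleSubgraph)
    (hd : Disjoint H₁.verts H₂.verts) :
    Nat.card V < G.edgeSet.ncard := by
  obtain ⟨t, ht⟩ := h₁.1.nonempty
  obtain ⟨a, ha, hamin⟩ := exists_min_image H₂.verts (G.dist · t) (toFinite _)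
    (nonempty_coe_sort.mp h₂.1.nonempty)
  have hat : a ∉ H₁.verts := hd.notMem_of_mem_right ha
  have hcount := ncard_add_ncard_le_ncard_edgeSet (G.dist · t)
    (union_subset H₁.edgeSet_subset H₂.edgeSet_subset) (S := insert a (H₁.verts ∪ H₂.verts)ᶜ) <| by
    intro s hs
    have hst : s ≠ t := by
      rintro rfl
      rcases hs with rfl | hs
      · exact hat ht
      · exact hs (Or.inl ht)
    obtain ⟨x, hadj, hlt⟩ := hconn.exists_adj_dist_lt hst
    refine ⟨x, hadj, hlt, ?_⟩
    rcases hs with rfl | hs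
    · rintro (he | he)
      · exact hat (H₁.mem_verts_of_mem_edge he (Sym2.mem_mk_left s x))
      · exact hlt.not_ge (hamin x (H₂.mem_verts_of_mem_edge he (Sym2.mem_mk_right s x)))
    · rintro (he | he)
      · exact hs (Or.inl (H₁.mem_verts_of_mem_edge he (Sym2.mem_mk_left s x)))
      · exact hs (Or.inr (H₂.mem_verts_of_mem_edge he (Sym2.mem_mk_left s x)))
  have haW : a ∉ (H₁.verts ∪ H₂.verts)ᶜ := fun h => h (Or.inr ha)
  rw [ncard_union_eq (Subgraph.disjoint_verts_iff_disjoint.mp hd).edgeSet,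
    ncard_insert_of_notMem haW, h₁.ncard_edgeSet, h₂.ncard_edgeSet,
    ← ncard_union_eq hd] at hcount
  have := ncard_add_ncard_compl (H₁.verts ∪ H₂.verts)
  omega

lemma Connected.card_lt_ncard_edgeSet_of_isCycleSubgraph_ne (hconn : G.Connected)
    {H₁ H₂ : G.Subgraph} (h₁ : H₁.IsCycleSubgraph) (h₂ : H₂.IsCycleSubgraph) (hne : H₁ ≠ H₂) :
    Nat.card V < G.edgeSet.ncard := by
  by_cases hd : Disjoint H₁.verts H₂.verts
  · exact hconn.card_lt_ncard_edgeSet_of_isCycleSubgraph_of_disjoint h₁ h₂ hd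
  · obtain ⟨t, ht₁, ht₂⟩ := not_disjoint_iff.mp hd
    exact hconn.card_lt_ncard_edgeSet_of_isCycleSubgraph_of_mem h₁ h₂ hne ht₁ ht₂

lemma Connected.not_isAcyclic_of_card_le (hconn : G.Connected)
    (h : Nat.card V ≤ G.edgeSet.ncard) : ¬ G.IsAcyclic := fun hacyc => by
  have := (isTree_iff_connected_and_card.mp ⟨hconn, hacyc⟩).2
  rw [Nat.card_coe_set_eq] at this
  omega

/-- A non-bridge edge `e` lies on a cycle, and `G - e` is still connected with at least as many
edges as vertices, so it has a cycle too, which avoids `e`. -/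
lemma Connected.exists_isCycleSubgraph_ne_of_card_lt (hconn : G.Connected)
    (h : Nat.card V < G.edgeSet.ncard) :
    ∃ H₁ H₂ : G.Subgraph, H₁.IsCycleSubgraph ∧ H₂.IsCycleSubgraph ∧ H₁ ≠ H₂ := by
  obtain ⟨x, y, hxy, hbridge⟩ : ∃ x y, G.Adj x y ∧ ¬ G.IsBridge s(x, y) := by
    simpa [isAcyclic_iff_forall_adj_isBridge] using hconn.not_isAcyclic_of_card_le h.le
  obtain ⟨u, c₁, hc₁, he₁⟩ : ∃ u, ∃ c : G.Walk u u, c.IsCycle ∧ s(x, y) ∈ c.edges := by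
    simpa [isBridge_iff_forall_cycle_notMem (G.mem_edgeSet.mpr hxy)] using hbridge
  have hcard : (G.deleteEdges {s(x, y)}).edgeSet.ncard + 1 = G.edgeSet.ncard := by
    rw [edgeSet_deleteEdges, ncard_sdiff_singleton_add_one (G.mem_edgeSet.mpr hxy)]
  obtain ⟨v, c₂, hc₂⟩ : ∃ v, ∃ c : (G.deleteEdges {s(x, y)}).Walk v v, c.IsCycle := by
    simpa [IsAcyclic] using
      (hconn.connected_delete_edge_of_not_isBridge hbridge).not_isAcyclic_of_card_le (by omega)
  refine ⟨c₁.toSubgraph, (c₂.mapLe (G.deleteEdges_le _)).toSubgraph,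
    hc₁.isCycleSubgraph_toSubgraph, (hc₂.mapLe _).isCycleSubgraph_toSubgraph, fun heq => ?_⟩
  have he₂ := heq ▸ c₁.mem_edges_toSubgraph.mpr he₁
  rw [Walk.mem_edges_toSubgraph, Walk.edges_mapLe_eq_edges] at he₂
  have := c₂.edges_subset_edgeSet he₂
  rw [edgeSet_deleteEdges] at this
  exact this.2 rfl

theorem Connected.subsingleton_isCycleSubgraph_iff (hconn : G.Connected) :
    {H : G.Subgraph | H.IsCycleSubgraph}.Subsingleton ↔ G.edgeSet.ncard ≤ Nat.card V := by
  refine ⟨fun h => ?_, fun hle H₁ h₁ H₂ h₂ => ?_⟩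
  · by_contra! hlt
    obtain ⟨H₁, H₂, h₁, h₂, hne⟩ := hconn.exists_isCycleSubgraph_ne_of_card_lt hlt
    exact hne (h h₁ h₂)
  · by_contra hne
    exact (hconn.card_lt_ncard_edgeSet_of_isCycleSubgraph_ne h₁ h₂ hne).not_ge hle

lemma Connected.ncard_le_max_of_subdivision_indep (hconn : G.Connected)
    {I : Set (V ⊕ G.edgeSet)} (hI : ∀ a ∈ I, ∀ b ∈ I, ¬ (subdivision G).Adj a b) :
    I.ncard ≤ max (Nat.card V) G.edgeSet.ncard := by
  rw [← ncard_preimage_inl_add_ncard_preimage_inr]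
  set A := Sum.inl ⁻¹' I
  set B := Sum.inr ⁻¹' I
  have hBA : ∀ e ∈ B, ∀ v ∈ (e : Sym2 V), v ∈ Aᶜ := fun e he v hv hvA => hI _ hvA _ he hv
  rcases Aᶜ.eq_empty_or_nonempty with hA | hA
  · have hB : B = ∅ := eq_empty_of_forall_notMem fun e he =>
      (hA ▸ hBA e he _ (Sym2.out_fst_mem _) : _ ∈ (∅ : Set V))
    rw [hB, ncard_empty, add_zero]
    exact (ncard_le_card A).trans (le_max_left _ _)
  · have := hconn.ncard_add_ncard_compl_le (F := (↑) '' B) (by simp) hA <| by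
      rintro _ ⟨e, he, rfl⟩
      exact hBA e he
    rw [compl_compl, ncard_image_of_injective _ Subtype.val_injective] at this
    omega

lemma Connected.isGreatest_subdivision_indep_iff (hconn : G.Connected) :
    IsGreatest {k : ℕ | ∃ I : Set (V ⊕ G.edgeSet),
        (∀ a ∈ I, ∀ b ∈ I, ¬ (subdivision G).Adj a b) ∧ I.ncard = k} (Nat.card V) ↔
      G.edgeSet.ncard ≤ Nat.card V := by
  refine ⟨fun h => h.2 ⟨range Sum.inr, ?_, ?_⟩, fun hle => ⟨⟨range Sum.inl, ?_, ?_⟩, ?_⟩⟩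
  · rintro _ ⟨e, rfl⟩ _ ⟨f, rfl⟩
    exact id
  · rw [ncard_range_of_injective Sum.inr_injective, Nat.card_coe_set_eq]
  · rintro _ ⟨v, rfl⟩ _ ⟨w, rfl⟩
    exact id
  · exact ncard_range_of_injective Sum.inl_injective
  · rintro _ ⟨I, hI, rfl⟩
    exact (hconn.ncard_le_max_of_subdivision_indep hI).trans (max_le le_rfl hle)

lemma Connected.isLeast_subdivision_cover_iff (hconn : G.Connected) :
    IsLeast {k : ℕ | ∃ C : Set (V ⊕ G.edgeSet),
        (∀ a b, (subdivision G).Adj a b → a ∈ C ∨ b ∈ C) ∧ C.ncard = k} G.edgeSet.ncard ↔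
      G.edgeSet.ncard ≤ Nat.card V := by
  refine ⟨fun h => h.2 ⟨range Sum.inl, ?_, ?_⟩, fun hle => ⟨⟨range Sum.inr, ?_, ?_⟩, ?_⟩⟩
  · rintro (v | e) (w | f) h
    exacts [Or.inl ⟨v, rfl⟩, Or.inl ⟨v, rfl⟩, Or.inr ⟨w, rfl⟩, h.elim]
  · exact ncard_range_of_injective Sum.inl_injective
  · rintro (v | e) (w | f) h
    exacts [h.elim, Or.inr ⟨f, rfl⟩, Or.inl ⟨e, rfl⟩, h.elim]
  · rw [ncard_range_of_injective Sum.inr_injective, Nat.card_coe_set_eq]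
  · rintro _ ⟨C, hC, rfl⟩
    have hindep := hconn.ncard_le_max_of_subdivision_indep (I := Cᶜ)
      fun a ha b hb hab => (hC a b hab).elim ha hb
    have hsum := ncard_add_ncard_compl C
    rw [Nat.card_sum, Nat.card_coe_set_eq, max_eq_left hle] at *
    omega

end SimpleGraph

theorem atMostOneCycle_tfae_general {V : Type*} [Fintype V] (G : SimpleGraph V)
    (hconn : G.Connected) :
    List.TFAE
      [ {H : G.Subgraph | H.IsCycleSubgraph}.Subsingleton,
        IsGreatest {k : ℕ | ∃ I : Set (V ⊕ G.edgeSet),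
            (∀ a ∈ I, ∀ b ∈ I, ¬ (subdivision G).Adj a b) ∧ I.ncard = k}
          (Fintype.card V),
        IsLeast {k : ℕ | ∃ C : Set (V ⊕ G.edgeSet),
            (∀ a b, (subdivision G).Adj a b → a ∈ C ∨ b ∈ C) ∧ C.ncard = k}
          G.edgeSet.ncard ] := by
  rw [← Nat.card_eq_fintype_card]
  refine List.tfae_of_forall (G.edgeSet.ncard ≤ Nat.card V) _ ?_
  simp only [List.mem_cons, List.not_mem_nil, or_false, forall_eq_or_imp, forall_eq]
  exact ⟨hconn.subsingleton_isCycleSubgraph_iff, hconn.isGreatest_subdivision_indep_iff,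
    hconn.isLeast_subdivision_cover_iff⟩

/-- For a finite connected simple graph `G` of order `n ≥ 2` and size `m`,
the following are equivalent: (i) `G` contains at most one cycle;
(ii) `α(S(G)) = |V| = n`; (iii) `τ(S(G)) = |S| = m`. -/
theorem atMostOneCycle_tfae {V : Type*} [Fintype V] (G : SimpleGraph V)
    (hconn : G.Connected) (hn : 2 ≤ Fintype.card V) :
    List.TFAE
      [ {H : G.Subgraph | H.IsCycleSubgraph}.Subsingleton,
        IsGreatest {k : ℕ | ∃ I : Set (V ⊕ G.edgeSet),
            (∀ a ∈ I, ∀ b ∈ I, ¬ (subdivision G).Adj a b) ∧ I.ncard = k}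
          (Fintype.card V),
        IsLeast {k : ℕ | ∃ C : Set (V ⊕ G.edgeSet),
            (∀ a b, (subdivision G).Adj a b → a ∈ C ∨ b ∈ C) ∧ C.ncard = k}
          G.edgeSet.ncard ] :=
  atMostOneCycle_tfae_general G hconn
end

section
/- Let G be a finite connected simple graph of order n ≥ 2 and size m. Then the edge-covering number of the subdivision graph S(G) satisfies ρ(S(G)) = max{n, m}. -/
/-!
Every edge of `S(G)` joins one vertex of `G` to one edge of `G`, so an edge cover needs at least
`n` edges to cover `V(G)` and at least `m` to cover `E(G)`.

Conversely, choosing an edge `Q v ∋ v` for every vertex `v` yields the cover consisting of the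
edges `v — Q v` together with one edge at each `e ∉ Q(V)`, of size `n + |E(G) \ Q(V)|`. This is
`max n m` as soon as `Q` is injective or surjective. To find such a `Q`, fix a spanning tree `T`
and a root `r`: sending each `v ≠ r` to the edge of `T` towards `r` is a bijection onto `E(T)`.
If `G = T`, let `r` pick any edge, and `Q` is onto. Otherwise take `r` to be an end of an edge
outside `T` and let `r` pick that edge: then `Q` is injective.
-/

open Function Set

lemma Nat.card_add_ncard_compl_range {α β : Type*} [Finite α] [Finite β] {f : α → β}
    (hf : Injective f ∨ Surjective f) :
    Nat.card α + (range f)ᶜ.ncard = max (Nat.card α) (Nat.card β) := by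
  have hsplit := ncard_add_ncard_compl (range f)
  rcases hf with hinj | hsurj
  · have := Nat.card_le_card_of_injective f hinj
    rw [ncard_range_of_injective hinj] at hsplit
    omega
  · have := Nat.card_le_card_of_surjective f hsurj
    rw [hsurj.range_eq, compl_univ, ncard_empty]
    omega

lemma Sym2.card_le_ncard_of_forall_exists_mem {ι α : Type*} (g : ι → α) {A : Set (Sym2 α)}
    (hA : A.Finite) (hcover : ∀ i, ∃ a ∈ A, g i ∈ a)
    (hsep : ∀ a ∈ A, ∀ i j, g i ∈ a → g j ∈ a → i = j) : Nat.card ι ≤ A.ncard := by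
  choose F hFA hF using hcover
  rw [← ncard_univ]
  exact ncard_le_ncard_of_injOn F (fun i _ => hFA i)
    (fun i _ j _ hij => hsep _ (hFA i) i j (hF i) (hij ▸ hF j)) hA

lemma Sym2.mk_inl_inr_injective {α β : Type*} :
    Injective (fun p : α × β => s(Sum.inl p.1, Sum.inr p.2)) := by
  rintro ⟨a, b⟩ ⟨c, d⟩ h
  simp_all

namespace SimpleGraph

variable {V : Type*} {G : SimpleGraph V}

lemma Connected.exists_adj_dist_add_one_eq (hG : G.Connected) {r v : V} (hv : v ≠ r) :
    ∃ w, G.Adj v w ∧ G.dist r w + 1 = G.dist r v := by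
  obtain ⟨p, hp⟩ := hG.exists_walk_length_eq_dist v r
  cases p with
  | nil => exact absurd rfl hv
  | @cons _ w _ hadj q =>
    refine ⟨w, hadj, ?_⟩
    have hq : G.dist r w ≤ q.length := dist_comm (G := G) ▸ dist_le q
    have htri : G.dist r v ≤ G.dist r w + G.dist w v := hG.dist_triangle
    rw [dist_eq_one_iff_adj.mpr hadj.symm] at htri
    rw [Walk.length_cons, dist_comm] at hp
    omega

lemma Connected.exists_injective_parentEdge (hG : G.Connected) (r : V) :
    ∃ p : {v // v ≠ r} → G.edgeSet, Injective p ∧ ∀ v, (v : V) ∈ (p v : Sym2 V) := by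
  choose w hadj hdist using fun v : {v // v ≠ r} => hG.exists_adj_dist_add_one_eq v.2
  refine ⟨fun v => ⟨s(v, w v), hadj v⟩, fun u v huv => ?_, fun v => Sym2.mem_mk_left _ _⟩
  -- `u = w v` and `v = w u` would make `dist r` drop strictly from `u` to `v` and back.
  rcases Sym2.eq_iff.mp (congrArg Subtype.val huv) with ⟨h, -⟩ | ⟨hu, hv⟩
  · exact Subtype.ext h
  · have := hdist u
    have := hdist v
    rw [← hu, hv] at *
    omega

lemma IsTree.exists_bijective_parentEdge [Finite V] (hT : G.IsTree) (r : V) :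
    ∃ p : {v // v ≠ r} → G.edgeSet, Bijective p ∧ ∀ v, (v : V) ∈ (p v : Sym2 V) := by
  classical
  obtain ⟨p, hinj, hp⟩ := hT.connected.exists_injective_parentEdge r
  refine ⟨p, hinj.bijective_of_nat_card_le ?_, hp⟩
  have hE := (isTree_iff_connected_and_card.mp hT).2
  have hV : Nat.card {v // v ≠ r} + 1 = Nat.card V := by
    rw [← Nat.card_congr (Equiv.optionSubtypeNe r), Finite.card_option]
  omega

lemma IsTree.exists_incident_of_le [Finite V] {T : SimpleGraph V} (hT : T.IsTree) (hTG : T ≤ G)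
    {r : V} {e₀ : G.edgeSet} (hr : r ∈ (e₀ : Sym2 V)) :
    ∃ Q : V → G.edgeSet, (∀ v, v ∈ (Q v : Sym2 V)) ∧
      ((e₀ : Sym2 V) ∉ T.edgeSet → Injective Q) ∧ (G.edgeSet ⊆ T.edgeSet → Surjective Q) := by
  classical
  obtain ⟨p, hp, hpv⟩ := hT.exists_bijective_parentEdge r
  let ι := inclusion (edgeSet_mono hTG)
  refine ⟨fun v => if h : v = r then e₀ else ι (p ⟨v, h⟩), fun v => ?_, fun he₀ => ?_,
    fun hGT e => ?_⟩
  · by_cases h : v = r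
    · simpa [h] using hr
    · simpa [h] using hpv ⟨v, h⟩
  · exact Injective.dite (· = r) (f := fun _ => e₀) (f' := ι ∘ p)
      (fun a b _ => Subtype.ext (a.2.trans b.2.symm)) ((inclusion_injective _).comp hp.1)
      fun h => he₀ (h ▸ (p _).2)
  · obtain ⟨v, hv⟩ := hp.2 ⟨e, hGT e.2⟩
    exact ⟨v, by simp [dif_neg v.2, ι, hv]⟩

lemma Connected.exists_incident_injective_or_surjective [Finite V] [Nontrivial V]
    (hG : G.Connected) :
    ∃ Q : V → G.edgeSet, (∀ v, v ∈ (Q v : Sym2 V)) ∧ (Injective Q ∨ Surjective Q) := by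
  obtain ⟨T, hTG, hT⟩ := hG.exists_isTree_le
  by_cases hGT : G.edgeSet ⊆ T.edgeSet
  · obtain ⟨r⟩ := ‹Nontrivial V›.to_nonempty
    obtain ⟨w, hw⟩ := hG.preconnected.exists_adj_of_nontrivial r
    obtain ⟨Q, hQ, -, hsurj⟩ := hT.exists_incident_of_le hTG (e₀ := ⟨s(r, w), hw⟩)
      (Sym2.mem_mk_left _ _)
    exact ⟨Q, hQ, .inr (hsurj hGT)⟩
  · obtain ⟨f, hfG, hfT⟩ := not_subset.mp hGT
    obtain ⟨Q, hQ, hinj, -⟩ := hT.exists_incident_of_le hTG (e₀ := ⟨f, hfG⟩) (Sym2.out_fst_mem f)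
    exact ⟨Q, hQ, .inl (hinj hfT)⟩

end SimpleGraph

section Subdivision

variable {V : Type*} {G : SimpleGraph V}

lemma exists_eq_mk_of_mem_edgeSet_subdivision {a : Sym2 (V ⊕ G.edgeSet)}
    (ha : a ∈ (subdivision G).edgeSet) : ∃ v e, a = s(Sum.inl v, Sum.inr e) := by
  induction a using Sym2.ind with
  | _ x y =>
    rcases x with v | e <;> rcases y with w | f
    · exact ha.elim
    · exact ⟨v, f, rfl⟩
    · exact ⟨w, e, Sym2.eq_swap⟩
    · exact ha.elim

lemma max_card_le_ncard_of_edgeCover_subdivision [Finite V] {A : Set (Sym2 (V ⊕ G.edgeSet))}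
    (hAG : A ⊆ (subdivision G).edgeSet) (hA : ∀ x, ∃ a ∈ A, x ∈ a) :
    max (Nat.card V) (Nat.card G.edgeSet) ≤ A.ncard := by
  refine max_le
    (Sym2.card_le_ncard_of_forall_exists_mem Sum.inl A.toFinite (fun v => hA (.inl v)) ?_)
    (Sym2.card_le_ncard_of_forall_exists_mem Sum.inr A.toFinite (fun e => hA (.inr e)) ?_) <;>
  · intro a ha i j hi hj
    obtain ⟨v, e, rfl⟩ := exists_eq_mk_of_mem_edgeSet_subdivision (hAG ha)
    simp_all

lemma exists_edgeCover_subdivision [Finite V] (Q : V → G.edgeSet)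
    (hQ : ∀ v, v ∈ (Q v : Sym2 V)) :
    ∃ A ⊆ (subdivision G).edgeSet, (∀ x, ∃ a ∈ A, x ∈ a) ∧
      A.ncard = Nat.card V + (range Q)ᶜ.ncard := by
  let S₁ : Set (V × G.edgeSet) := range fun v => (v, Q v)
  let S₂ : Set (V × G.edgeSet) := range fun e : ↥(range Q)ᶜ => ((e : Sym2 V).out.1, e.1)
  refine ⟨(fun p => s(Sum.inl p.1, Sum.inr p.2)) '' (S₁ ∪ S₂), ?_, ?_, ?_⟩
  · rintro _ ⟨_, ⟨v, rfl⟩ | ⟨e, rfl⟩, rfl⟩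
    exacts [hQ v, Sym2.out_fst_mem _]
  · rintro (v | e)
    · exact ⟨_, mem_image_of_mem _ (.inl ⟨v, rfl⟩), by simp⟩
    · by_cases he : e ∈ range Q
      · obtain ⟨v, rfl⟩ := he
        exact ⟨_, mem_image_of_mem _ (.inl ⟨v, rfl⟩), by simp⟩
      · exact ⟨_, mem_image_of_mem _ (.inr ⟨⟨e, he⟩, rfl⟩), by simp⟩
  · have hdisj : Disjoint S₁ S₂ := by
      rw [Set.disjoint_left]
      rintro _ ⟨v, rfl⟩ ⟨e, he⟩
      exact e.2 ⟨v, (congrArg Prod.snd he).symm⟩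
    rw [ncard_image_of_injective _ Sym2.mk_inl_inr_injective, ncard_union_eq hdisj,
      ncard_range_of_injective (fun u v h => congrArg Prod.fst h),
      ncard_range_of_injective (fun e f h => Subtype.ext (congrArg Prod.snd h)),
      Nat.card_coe_set_eq]

end Subdivision

/-- For a finite connected simple graph `G` of order `n ≥ 2` and size `m`,
`ρ(S(G)) = max {n, m}`, i.e. `max {n, m}` is the least cardinality of an edge cover
(a set of edges covering every vertex) of `S(G)`. -/
theorem edgeCoverNum_subdivision {V : Type*} [Fintype V] (G : SimpleGraph V)
    (hconn : G.Connected) (hn : 2 ≤ Fintype.card V) :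
    IsLeast {k : ℕ | ∃ A : Set (Sym2 (V ⊕ G.edgeSet)),
        A ⊆ (subdivision G).edgeSet ∧
        (∀ x : V ⊕ G.edgeSet, ∃ e ∈ A, x ∈ e) ∧
        A.ncard = k}
      (max (Fintype.card V) G.edgeSet.ncard) := by
  have : Nontrivial V := Fintype.one_lt_card_iff_nontrivial.mp hn
  rw [← Nat.card_eq_fintype_card, ← Nat.card_coe_set_eq]
  refine ⟨?_, ?_⟩
  · obtain ⟨Q, hQ, hQ'⟩ := hconn.exists_incident_injective_or_surjective
    obtain ⟨A, hAG, hA, hcard⟩ := exists_edgeCover_subdivision Q hQ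
    exact ⟨A, hAG, hA, hcard.trans (Nat.card_add_ncard_compl_range hQ')⟩
  · rintro _ ⟨A, hAG, hA, rfl⟩
    exact max_card_le_ncard_of_edgeCover_subdivision hAG hA
end

section
/- Let G be a finite simple graph with subdivision graph S(G). Then ∂(G) ≤ ∂(S(G)), where ∂ denotes the differential of a graph. -/
/-- `B(D)`: the set of vertices outside `D` that have a neighbour in `D`. -/
def extBoundary {W : Type*} (H : SimpleGraph W) (D : Set W) : Set W :=
  {v | v ∉ D ∧ ∃ u ∈ D, H.Adj u v}

/-- The differential of a set of vertices: `∂(D) = |B(D)| - |D|`. -/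
noncomputable def setDifferential {W : Type*} (H : SimpleGraph W) (D : Set W) : ℤ :=
  ((extBoundary H D).ncard : ℤ) - (D.ncard : ℤ)

/-- The differential of a graph: `∂(H) = max {∂(D) : D ⊆ V(H)}`. -/
noncomputable def graphDifferential {W : Type*} (H : SimpleGraph W) : ℤ :=
  sSup {x : ℤ | ∃ D : Set W, x = setDifferential H D}

/-! A set `D ⊆ V(G)` has the same size in `S(G)`. Every `u ∈ B(D)` has a neighbour `w ∈ D`, and
the edge `wu` lies in the boundary of `D` in `S(G)`; conversely an edge with an endpoint in `D` is
incident to at most one vertex outside `D`. So `∂(D)` does not drop when `D` is viewed in `S(G)`,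
and taking maxima gives the theorem. -/

namespace Set

variable {α β : Type*}

theorem ncard_le_ncard_of_forall_subsingleton {s : Set α} {t : Set β} (r : α → β → Prop)
    (hs : ∀ a ∈ s, ∃ b ∈ t, r a b) (ht : ∀ b ∈ t, {a ∈ s | r a b}.Subsingleton)
    (hsf : s.Finite := by toFinite_tac) (htf : t.Finite := by toFinite_tac) :
    s.ncard ≤ t.ncard := by
  obtain ⟨s, rfl⟩ := hsf.exists_finset_coe
  obtain ⟨t, rfl⟩ := htf.exists_finset_coe
  simp only [ncard_coe_finset]
  exact Finset.card_le_card_of_forall_subsingleton r hs ht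

end Set

section Subdivision

variable {V : Type*} {G : SimpleGraph V}

@[simp]
theorem subdivision_adj_inl_inr {v : V} {e : G.edgeSet} :
    (subdivision G).Adj (.inl v) (.inr e) ↔ v ∈ (e : Sym2 V) := Iff.rfl

@[simp]
theorem subdivision_adj_inr_inl {v : V} {e : G.edgeSet} :
    (subdivision G).Adj (.inr e) (.inl v) ↔ v ∈ (e : Sym2 V) := Iff.rfl

@[simp]
theorem not_subdivision_adj_inl_inl {v w : V} : ¬(subdivision G).Adj (.inl v) (.inl w) := id

theorem mem_extBoundary_subdivision_inr {D : Set V} {e : G.edgeSet} :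
    .inr e ∈ extBoundary (subdivision G) (Sum.inl '' D) ↔ ∃ w ∈ D, w ∈ (e : Sym2 V) := by
  simp [extBoundary]

theorem ncard_extBoundary_le_ncard_extBoundary_subdivision [Finite V] (D : Set V) :
    (extBoundary G D).ncard ≤ (extBoundary (subdivision G) (Sum.inl '' D)).ncard := by
  refine Set.ncard_le_ncard_of_forall_subsingleton (fun u x ↦ (subdivision G).Adj x (.inl u))
    ?_ ?_
  · rintro u ⟨-, w, hw, hwu⟩
    exact ⟨.inr ⟨s(w, u), hwu⟩,
      mem_extBoundary_subdivision_inr.2 ⟨w, hw, Sym2.mem_mk_left _ _⟩, Sym2.mem_mk_right _ _⟩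
  · rintro (x | e) ⟨-, -, ⟨w, hw, rfl⟩, hwx⟩
    · exact absurd hwx not_subdivision_adj_inl_inl
    rintro u ⟨⟨hu, -⟩, hue⟩ u' ⟨⟨hu', -⟩, hu'e⟩
    have hwu : w ≠ u := by rintro rfl; exact hu hw
    have he : (e : Sym2 V) = s(w, u) := (Sym2.mem_and_mem_iff hwu).1 ⟨hwx, hue⟩
    rw [subdivision_adj_inr_inl, he, Sym2.mem_iff] at hu'e
    rcases hu'e with rfl | rfl
    · exact absurd hw hu'
    · rfl

theorem setDifferential_le_setDifferential_subdivision [Finite V] (D : Set V) :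
    setDifferential G D ≤ setDifferential (subdivision G) (Sum.inl '' D) := by
  unfold setDifferential
  rw [Set.ncard_image_of_injective D Sum.inl_injective]
  gcongr
  exact ncard_extBoundary_le_ncard_extBoundary_subdivision D

end Subdivision

section Differential

variable {W : Type*} (H : SimpleGraph W)

theorem setDifferential_le_graphDifferential [Finite W] (D : Set W) :
    setDifferential H D ≤ graphDifferential H := by
  have hbdd : BddAbove {x : ℤ | ∃ D : Set W, x = setDifferential H D} :=
    ((Set.finite_range (setDifferential H)).subset <| by
      rintro _ ⟨D, rfl⟩; exact ⟨D, rfl⟩).bddAbove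
  exact le_csSup hbdd ⟨D, rfl⟩

theorem graphDifferential_le {c : ℤ} (h : ∀ D, setDifferential H D ≤ c) :
    graphDifferential H ≤ c :=
  csSup_le ⟨_, ∅, rfl⟩ (by rintro _ ⟨D, rfl⟩; exact h D)

end Differential

/-- For every finite simple graph `G`, `∂(G) ≤ ∂(S(G))`. -/
theorem differential_le_subdivision {V : Type*} [Fintype V] (G : SimpleGraph V) :
    graphDifferential G ≤ graphDifferential (subdivision G) :=
  graphDifferential_le G fun D ↦ (setDifferential_le_setDifferential_subdivision D).trans
    (setDifferential_le_graphDifferential _ _)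
end
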